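/- Let P, Q ⊆ ℕ be disjoint and inhabited. Then the decoding oracle d_{P⊗Q, Q⊗P} is T1-reducible to the decoding oracle d_{P,Q}. -/

import Mathlib

open Classical in
/-- The oracle game: the list of previous answers by Merlin up to stage `i`,
for the answer sequence `s`. -/
def prefixList (s : ℕ → ℕ) (i : ℕ) : List ℕ := List.ofFn (fun j : Fin i => s j)

/-- A winning Arthur+Nimue strategy for the reduction game of the basic oracle `ℱ`
to the basic oracle `𝒢`. -/
def Winning (ℱ 𝒢 : Set (Set ℕ)) (σ : List ℕ →. Option ℕ) (ν : Set ℕ → List ℕ → Set ℕ) : Prop :=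
  (∀ F ∈ ℱ, ∀ l : List ℕ, ν F l ∈ 𝒢) ∧
  ∀ F ∈ ℱ, ∀ s : ℕ → ℕ, (∀ i, s i ∈ ν F (prefixList s i)) →
    ∃ k, (∀ i ≤ k, (σ (prefixList s i)).Dom) ∧
      (∀ i < k, none ∈ σ (prefixList s i)) ∧
      ∃ u ∈ F, some u ∈ σ (prefixList s k)

/-- The encoding of an Arthur strategy as a partial function `ℕ →. ℕ`, via the
standard Mathlib encodings of `List ℕ` and `Option ℕ`. -/
def arthurCode (σ : List ℕ →. Option ℕ) : ℕ →. ℕ :=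
  fun n => (σ (Denumerable.ofNat (List ℕ) n)).map Encodable.encode

open Classical in
/-- The decoding oracle associated to the promise problem `(P, Q)`: value `0` on `P`,
value `1` on `Q`, undefined elsewhere. -/
noncomputable def dOracle (P Q : Set ℕ) : ℕ →. ℕ :=
  fun n => ⟨n ∈ P ∪ Q, fun _ => if n ∈ Q then 1 else 0⟩

open Classical in
/-- The characteristic function of a set of naturals. -/
noncomputable def chi (A : Set ℕ) : ℕ → ℕ := fun n => if n ∈ A then 1 else 0

/-- The coded cartesian product of two sets of naturals. -/
def tensor (P Q : Set ℕ) : Set ℕ := {x | ∃ p ∈ P, ∃ q ∈ Q, x = Nat.pair p q}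

infixl:70 " ⊗ " => tensor

/-- Oracle computability, as in Mathlib's `Nat.RecursiveIn`. -/
inductive Nat.RecursiveInOracle (g : ℕ →. ℕ) : (ℕ →. ℕ) → Prop
  | zero : Nat.RecursiveInOracle g fun _ => 0
  | succ : Nat.RecursiveInOracle g Nat.succ
  | left : Nat.RecursiveInOracle g fun n => (Nat.unpair n).1
  | right : Nat.RecursiveInOracle g fun n => (Nat.unpair n).2
  | oracle : Nat.RecursiveInOracle g g
  | pair {f h : ℕ →. ℕ} (hf : Nat.RecursiveInOracle g f) (hh : Nat.RecursiveInOracle g h) :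
      Nat.RecursiveInOracle g fun n => (Nat.pair <$> f n <*> h n)
  | comp {f h : ℕ →. ℕ} (hf : Nat.RecursiveInOracle g f) (hh : Nat.RecursiveInOracle g h) :
      Nat.RecursiveInOracle g fun n => h n >>= f
  | prec {f h : ℕ →. ℕ} (hf : Nat.RecursiveInOracle g f) (hh : Nat.RecursiveInOracle g h) :
      Nat.RecursiveInOracle g
        (Nat.unpaired fun a n =>
          n.rec (f a) fun y IH => do
            let i ← IH
            h (Nat.pair a (Nat.pair y i)))
  | rfind {f : ℕ →. ℕ} (hf : Nat.RecursiveInOracle g f) :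
      Nat.RecursiveInOracle g fun a =>
        Nat.rfind fun n => (fun m => m = 0) <$> f (Nat.pair a n)

/-- `f` is T1-reducible to `g`: some partial function recursive in the oracle `g`
extends `f`. -/
def T1Reducible (f g : ℕ →. ℕ) : Prop :=
  ∃ h : ℕ →. ℕ, Nat.RecursiveInOracle g h ∧ ∀ n : ℕ, ∀ a ∈ f n, a ∈ h n

/-- `f` is T1-computable: it has a partial computable extension. -/
def T1Computable (f : ℕ →. ℕ) : Prop :=
  ∃ h : ℕ →. ℕ, Nat.Partrec h ∧ ∀ n : ℕ, ∀ a ∈ f n, a ∈ h n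

/-- Codes for oracle computations: Mathlib's `Nat.Partrec.Code` extended by an
`oracle` constructor. -/
inductive OCode : Type
  | zero : OCode
  | succ : OCode
  | left : OCode
  | right : OCode
  | oracle : OCode
  | pair : OCode → OCode → OCode
  | comp : OCode → OCode → OCode
  | prec : OCode → OCode → OCode
  | rfind' : OCode → OCode

/-- Evaluation of an oracle code relative to the oracle `g`, by the same structural
recursion as Mathlib's `Nat.Partrec.Code.eval`. -/
def OCode.eval (g : ℕ →. ℕ) : OCode → ℕ →. ℕ
  | .zero => pure 0
  | .succ => Nat.succ
  | .left => ↑fun n : ℕ => n.unpair.1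
  | .right => ↑fun n : ℕ => n.unpair.2
  | .oracle => g
  | .pair cf cg => fun n => Nat.pair <$> cf.eval g n <*> cg.eval g n
  | .comp cf cg => fun n => cg.eval g n >>= cf.eval g
  | .prec cf cg =>
    Nat.unpaired fun a n =>
      n.rec (cf.eval g a) fun y IH => do
        let i ← IH
        cg.eval g (Nat.pair a (Nat.pair y i))
  | .rfind' cf =>
    Nat.unpaired fun a m =>
      (Nat.rfind fun n => (fun m => m = 0) <$> cf.eval g (Nat.pair a (n + m))).map (· + m)

/-- The `n`-th oracle code. -/
def OCode.ofNat : ℕ → OCode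
  | 0 => .zero
  | 1 => .succ
  | 2 => .left
  | 3 => .right
  | 4 => .oracle
  | n + 5 =>
    have h1 : (n / 4).unpair.1 < n + 5 :=
      lt_of_le_of_lt (le_trans (Nat.unpair_left_le _) (Nat.div_le_self _ _)) (by omega)
    have h2 : (n / 4).unpair.2 < n + 5 :=
      lt_of_le_of_lt (le_trans (Nat.unpair_right_le _) (Nat.div_le_self _ _)) (by omega)
    if n % 4 = 0 then .pair (OCode.ofNat (n / 4).unpair.1) (OCode.ofNat (n / 4).unpair.2)
    else if n % 4 = 1 then .comp (OCode.ofNat (n / 4).unpair.1) (OCode.ofNat (n / 4).unpair.2)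
    else if n % 4 = 2 then .prec (OCode.ofNat (n / 4).unpair.1) (OCode.ofNat (n / 4).unpair.2)
    else .rfind' (OCode.ofNat (n / 4).unpair.1)

/-- `φ_e^g`: the evaluation of the `e`-th oracle code relative to the oracle `g`. -/
def phi (g : ℕ →. ℕ) (e : ℕ) : ℕ →. ℕ := (OCode.ofNat e).eval g

/-- `H_i^A`: the set of (codes of) oracle programs which, run with the characteristic
function of `A` as oracle, halt on input `0` with output `i`. -/
def Hset (A : Set ℕ) (i : ℕ) : Set ℕ := {e : ℕ | (i : ℕ) ∈ phi (chi A) e 0}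


/-
The projection `n ↦ n.unpair.1` maps `P ⊗ Q` into `P` and `Q ⊗ P` into `Q`, so it is a many-one
reduction of the promise problem `(P ⊗ Q, Q ⊗ P)` to `(P, Q)`; disjointness of `P` and `Q` makes
`n ↦ d_{P,Q}(n.unpair.1)`, which queries the oracle once, agree with `d_{P⊗Q, Q⊗P}` on its domain.
-/

theorem Nat.RecursiveInOracle.comp_unpair_fst {g f : ℕ →. ℕ} (hf : Nat.RecursiveInOracle g f) :
    Nat.RecursiveInOracle g fun n => f n.unpair.1 := by
  have hproj : (fun n : ℕ => (n.unpair.1 : Part ℕ) >>= f) = fun n => f n.unpair.1 :=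
    funext fun n => Part.bind_some _ _
  exact hproj ▸ hf.comp .left

theorem unpair_fst_mem_of_mem_tensor {P Q : Set ℕ} {n : ℕ} (hn : n ∈ P ⊗ Q) : n.unpair.1 ∈ P := by
  obtain ⟨p, hp, q, -, rfl⟩ := hn
  simpa using hp

theorem mem_dOracle_of_mapsTo {P Q P' Q' : Set ℕ} {f : ℕ → ℕ} (hPQ : Disjoint P Q)
    (hP : Set.MapsTo f P' P) (hQ : Set.MapsTo f Q' Q) {n a : ℕ} (ha : a ∈ dOracle P' Q' n) :
    a ∈ dOracle P Q (f n) := by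
  obtain ⟨hn, rfl⟩ := ha
  by_cases hnQ : n ∈ Q'
  · exact ⟨Or.inr (hQ hnQ), by simp [dOracle, hnQ, hQ hnQ]⟩
  · have hnP : n ∈ P' := hn.resolve_right hnQ
    have hfnQ : f n ∉ Q := Set.disjoint_left.mp hPQ (hP hnP)
    exact ⟨Or.inl (hP hnP), by simp [dOracle, hnQ, hfnQ]⟩

theorem stmt11_general (P Q : Set ℕ) (hdisj : Disjoint P Q) :
    T1Reducible (dOracle (P ⊗ Q) (Q ⊗ P)) (dOracle P Q) :=
  ⟨fun n => dOracle P Q n.unpair.1, Nat.RecursiveInOracle.oracle.comp_unpair_fst,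
    fun _ _ => mem_dOracle_of_mapsTo hdisj (fun _ => unpair_fst_mem_of_mem_tensor)
      (fun _ => unpair_fst_mem_of_mem_tensor)⟩

theorem stmt11 (P Q : Set ℕ) (hdisj : Disjoint P Q) (hP : P.Nonempty) (hQ : Q.Nonempty) :
    T1Reducible (dOracle (P ⊗ Q) (Q ⊗ P)) (dOracle P Q) :=
  stmt11_general P Q hdisj
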